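/- arXiv:1602.03771 — 3 statements merged into one kernel-verified Lean document; each statement's English description precedes it below -/
import Mathlib

section
/- Let x^(k) be feasible on level k: phi^(k) <= x^(k) <= psi^(k) componentwise. Define coarse bounds phi^(k-1) = R~^phi(phi^(k) - x^(k)) + I x^(k) and psi^(k-1) = R~^psi(psi^(k) - x^(k)) + I x^(k) using the min/max restriction operators. If the coarse correction v^(k-1) satisfies phi^(k-1) <= v^(k-1) <= psi^(k-1) and the prolongation I_{k-1}^k is nonnegative with row sums at most 1 (each fine basis value is a convex combination with nonnegative weights summing to <= 1), then the updated fine iterate x^(k) + I_{k-1}^k(v^(k-1) - I_k^{k-1} x^(k)) remains feasible: phi^(k) <= x_new <= psi^(k). -/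
/-- Feasibility preservation of the FAS coarse-grid correction (Algorithm 3).
Let `x` be feasible on the fine level (`φ ≤ x ≤ ψ`), let the coarse bounds be
`φc i = R̃φ(φ - x) i + xc i` and `ψc i = R̃ψ(ψ - x) i + xc i` with the modified
max/min restriction operators over the fine neighbourhoods `N i`, and let the
prolongation matrix `Pmat` be nonnegative with row sums at most `1` and supported on
the neighbourhoods. If the coarse correction `v` is feasible, `φc ≤ v ≤ ψc`, then
the updated fine iterate `x j + ∑ i, Pmat j i * (v i - xc i)` remains feasible. -/
theorem stmt10 (nk nk1 : ℕ)
    (N : Fin nk1 → Finset (Fin nk)) (hN : ∀ i, (N i).Nonempty)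
    (φ ψ x : Fin nk → ℝ)
    (hfeas : ∀ j, φ j ≤ x j ∧ x j ≤ ψ j)
    (xc : Fin nk1 → ℝ)  -- the restricted iterate `I_k^{k-1} x`
    (φc ψc : Fin nk1 → ℝ)
    (hφc : ∀ i, φc i =
      (if (N i).sup' (hN i) (fun j => φ j - x j) = 0 then 0
       else (N i).sup' (hN i) (fun j => φ j - x j)) + xc i)
    (hψc : ∀ i, ψc i =
      (if (N i).inf' (hN i) (fun j => ψ j - x j) = 0 then 0
       else (N i).inf' (hN i) (fun j => ψ j - x j)) + xc i)
    (Pmat : Fin nk → Fin nk1 → ℝ)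
    (hPnonneg : ∀ j i, 0 ≤ Pmat j i)
    (hProw : ∀ j, (∑ i, Pmat j i) ≤ 1)
    (hPsupp : ∀ j i, Pmat j i ≠ 0 → j ∈ N i)
    (v : Fin nk1 → ℝ) (hv : ∀ i, φc i ≤ v i ∧ v i ≤ ψc i)
    (xnew : Fin nk → ℝ)
    (hxnew : ∀ j, xnew j = x j + ∑ i, Pmat j i * (v i - xc i)) :
    ∀ j, φ j ≤ xnew j ∧ xnew j ≤ ψ j := by
  intro j
  rw [hxnew]
  set a := φ j - x j with ha
  set b := ψ j - x j with hb
  have ha0 : a ≤ 0 := by have := (hfeas j).1; simp [ha]; linarith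
  have hb0 : 0 ≤ b := by have := (hfeas j).2; simp [hb]; linarith
  have hlow : ∀ i, Pmat j i * a ≤ Pmat j i * (v i - xc i) := by
    intro i
    rcases eq_or_ne (Pmat j i) 0 with h | h
    · simp [h]
    · have hj : j ∈ N i := hPsupp j i h
      have hs : a ≤ (N i).sup' (hN i) (fun j => φ j - x j) :=
        Finset.le_sup' (fun j => φ j - x j) hj
      have hvi : a ≤ v i - xc i := by
        have := (hv i).1
        rw [hφc i] at this
        split_ifs at this with hz
        · linarith [hs, hz ▸ hs]
        · linarith
      exact mul_le_mul_of_nonneg_left hvi (hPnonneg j i)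
  have hup : ∀ i, Pmat j i * (v i - xc i) ≤ Pmat j i * b := by
    intro i
    rcases eq_or_ne (Pmat j i) 0 with h | h
    · simp [h]
    · have hj : j ∈ N i := hPsupp j i h
      have hs : (N i).inf' (hN i) (fun j => ψ j - x j) ≤ b :=
        Finset.inf'_le (fun j => ψ j - x j) hj
      have hvi : v i - xc i ≤ b := by
        have := (hv i).2
        rw [hψc i] at this
        split_ifs at this with hz
        · linarith [hs, hz ▸ hs]
        · linarith
      exact mul_le_mul_of_nonneg_left hvi (hPnonneg j i)
  have hsum0 : 0 ≤ ∑ i, Pmat j i := Finset.sum_nonneg fun i _ => hPnonneg j i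
  have hL : a ≤ ∑ i, Pmat j i * (v i - xc i) := by
    calc a = 1 * a := (one_mul a).symm
    _ ≤ (∑ i, Pmat j i) * a := mul_le_mul_of_nonpos_right (hProw j) ha0
    _ = ∑ i, Pmat j i * a := Finset.sum_mul ..
    _ ≤ _ := Finset.sum_le_sum fun i _ => hlow i
  have hU : (∑ i, Pmat j i * (v i - xc i)) ≤ b := by
    calc (∑ i, Pmat j i * (v i - xc i)) ≤ ∑ i, Pmat j i * b :=
        Finset.sum_le_sum fun i _ => hup i
    _ = (∑ i, Pmat j i) * b := (Finset.sum_mul ..).symm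
    _ ≤ 1 * b := mul_le_mul_of_nonneg_right (hProw j) hb0
    _ = b := one_mul b
  constructor <;> simp [ha, hb] at hL hU ⊢ <;> linarith
end

section
/- (Kantorovich bound for steepest descent) For f(x) = (1/2) x^T Q x - q^T x with Q symmetric positive definite having extreme eigenvalues 0 < lambda_min <= lambda_max, the exact-line-search steepest descent iterate satisfies ||x_+ - x*||_Q^2 <= ((lambda_max - lambda_min)/(lambda_max + lambda_min))^2 ||x - x*||_Q^2. -/
open Matrix

private lemma kant_aux (m M A B C : ℝ) (h0 : 0 ≤ A + m*M*B) (h1 : 0 ≤ (m+M)*C)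
    (key : A + m*M*B ≤ (m+M)*C) : 4*m*M*(A*B) ≤ (m+M)^2 * C^2 := by
  nlinarith [sq_nonneg (A - m*M*B), mul_le_mul key key h0 h1]

/-- Kantorovich bound for exact-line-search steepest descent on the quadratic
`f(x) = ½ xᵀQx - qᵀx` with `Q` SPD whose spectrum lies in `[λmin, λmax]`,
`0 < λmin ≤ λmax`: with `g = Qx - q`, `s* = (gᵀg)/(gᵀQg)`, `x₊ = x - s* • g`,
`x* = Q⁻¹ q`, one has
`‖x₊ - x*‖_Q² ≤ ((λmax - λmin)/(λmax + λmin))² ‖x - x*‖_Q²`. -/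
theorem stmt14 (n : ℕ) (Q : Matrix (Fin n) (Fin n) ℝ)
    (hQsymm : Q.IsSymm) (hQpd : Q.PosDef)
    (lmin lmax : ℝ) (hl : 0 < lmin) (hll : lmin ≤ lmax)
    (hspec : ∀ v : Fin n → ℝ,
      lmin * (v ⬝ᵥ v) ≤ v ⬝ᵥ Q.mulVec v ∧ v ⬝ᵥ Q.mulVec v ≤ lmax * (v ⬝ᵥ v))
    (q x : Fin n → ℝ)
    (xstar : Fin n → ℝ) (hxstar : Q.mulVec xstar = q)
    (g : Fin n → ℝ) (hg : g = Q.mulVec x - q) (hgne : g ≠ 0)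
    (sstar : ℝ) (hsstar : sstar = (g ⬝ᵥ g) / (g ⬝ᵥ Q.mulVec g))
    (xplus : Fin n → ℝ) (hxplus : xplus = x - sstar • g) :
    (xplus - xstar) ⬝ᵥ Q.mulVec (xplus - xstar)
      ≤ ((lmax - lmin) / (lmax + lmin)) ^ 2
        * ((x - xstar) ⬝ᵥ Q.mulVec (x - xstar)) := by
  have hsym : ∀ u v : Fin n → ℝ, u ⬝ᵥ Q.mulVec v = Q.mulVec u ⬝ᵥ v := by
    intro u v
    rw [Matrix.dotProduct_mulVec, ← Matrix.mulVec_transpose, hQsymm.eq, dotProduct_comm]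
  obtain ⟨e, he⟩ : ∃ e : Fin n → ℝ, e = x - xstar := ⟨_, rfl⟩
  have hQe : Q.mulVec e = g := by
    rw [he, Matrix.mulVec_sub, hxstar, hg]
  have hene : e ≠ 0 := by
    intro h0
    apply hgne
    rw [← hQe, h0, Matrix.mulVec_zero]
  obtain ⟨A, hA⟩ : ∃ A : ℝ, A = g ⬝ᵥ Q.mulVec g := ⟨_, rfl⟩
  obtain ⟨C, hC⟩ : ∃ C : ℝ, C = g ⬝ᵥ g := ⟨_, rfl⟩
  obtain ⟨B, hB⟩ : ∃ B : ℝ, B = e ⬝ᵥ g := ⟨_, rfl⟩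
  obtain ⟨P, hP⟩ : ∃ P : ℝ, P = e ⬝ᵥ e := ⟨_, rfl⟩
  have hCpos : 0 < C := by
    rcases lt_or_eq_of_le (hC ▸ (Finset.sum_nonneg fun i _ => mul_self_nonneg (g i)) :
      0 ≤ C) with h | h
    · exact h
    · exact absurd (dotProduct_self_eq_zero.mp (hC ▸ h.symm)) hgne
  have hPpos : 0 < P := by
    rcases lt_or_eq_of_le (hP ▸ (Finset.sum_nonneg fun i _ => mul_self_nonneg (e i)) :
      0 ≤ P) with h | h
    · exact h
    · exact absurd (dotProduct_self_eq_zero.mp (hP ▸ h.symm)) hene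
  have heQe : e ⬝ᵥ Q.mulVec e = B := by rw [hQe, hB]
  have heQg : e ⬝ᵥ Q.mulVec g = C := by rw [hsym, hQe, hC]
  have hgQe : g ⬝ᵥ Q.mulVec e = C := by rw [hQe, hC]
  have hApos : 0 < A := by
    rw [hA]
    exact lt_of_lt_of_le (by rw [← hC] at *; positivity) ((hspec g).1)
  have hBpos : 0 < B := by
    rw [← heQe]
    exact lt_of_lt_of_le (by rw [← hP] at *; positivity) ((hspec e).1)
  have hspecE1 : lmin * P ≤ B := by rw [hP, ← heQe]; exact (hspec e).1
  have hspecE2 : B ≤ lmax * P := by rw [hP, ← heQe]; exact (hspec e).2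
  have hspecG2 : A ≤ lmax * C := by rw [hA, hC]; exact (hspec g).2
  -- Key inequality : A + lmin*lmax*B ≤ (lmin+lmax)*C
  have hw1 := (hspec (g - lmax • e)).1
  have hw2 := (hspec (g - lmin • e)).2
  have expand_dot : ∀ t : ℝ, (g - t • e) ⬝ᵥ (g - t • e) = C - 2*t*B + t^2*P := by
    intro t
    simp only [dotProduct_sub, sub_dotProduct, dotProduct_smul, smul_dotProduct,
      smul_eq_mul]
    rw [dotProduct_comm g e, ← hC, ← hB, ← hP]
    ring
  have expand_Q : ∀ t : ℝ, (g - t • e) ⬝ᵥ Q.mulVec (g - t • e) = A - 2*t*C + t^2*B := by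
    intro t
    rw [Matrix.mulVec_sub, Matrix.mulVec_smul]
    simp only [dotProduct_sub, sub_dotProduct, dotProduct_smul, smul_dotProduct,
      smul_eq_mul]
    rw [heQg, hgQe, heQe, ← hA]
    ring
  rw [expand_dot, expand_Q] at hw1 hw2
  have key : A + lmin*lmax*B ≤ (lmin+lmax)*C := by
    rcases eq_or_lt_of_le hll with hEq | hlt
    · subst hEq
      have hw : 0 ≤ C - 2*lmin*B + lmin^2*P := by
        rw [← expand_dot lmin]
        exact Finset.sum_nonneg fun i _ => mul_self_nonneg ((g - lmin • e) i)
      nlinarith [mul_le_mul_of_nonneg_left hspecE1 hl.le,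
        mul_le_mul_of_nonneg_left hspecE2 hl.le]
    · have H1 := mul_le_mul_of_nonneg_left hw1 hl.le
      have H2 := mul_le_mul_of_nonneg_left hw2 (by linarith : (0:ℝ) ≤ lmax)
      have hT : 0 ≤ (lmax - lmin) * ((lmin+lmax)*C - A - lmin*lmax*B) := by
        nlinarith [H1, H2]
      have hpos : 0 < lmax - lmin := sub_pos.2 hlt
      have := div_nonneg hT hpos.le
      rw [mul_div_cancel_left₀ _ hpos.ne'] at this
      linarith
  -- reduce LHS and RHS
  have hlhs : (xplus - xstar) ⬝ᵥ Q.mulVec (xplus - xstar)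
      = B - 2*sstar*C + sstar^2*A := by
    have hxe : xplus - xstar = e - sstar • g := by
      rw [hxplus, he]; abel
    rw [hxe, Matrix.mulVec_sub, Matrix.mulVec_smul]
    simp only [dotProduct_sub, sub_dotProduct, dotProduct_smul, smul_dotProduct,
      smul_eq_mul]
    rw [heQg, hgQe, heQe, ← hA]
    ring
  have hrhs : (x - xstar) ⬝ᵥ Q.mulVec (x - xstar) = B := by rw [← he]; exact heQe
  have hsstar' : sstar = C / A := by rw [hsstar, ← hC, ← hA]
  rw [hlhs, hrhs]
  have hlm : 0 < lmax := lt_of_lt_of_le hl hll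
  have hsum : 0 < lmax + lmin := by linarith
  have hkey2 : 4*lmin*lmax*(A*B) ≤ (lmin+lmax)^2 * C^2 := by
    have h0 : 0 ≤ A + lmin*lmax*B := by nlinarith [mul_pos (mul_pos hl hlm) hBpos]
    have h1 : (0:ℝ) ≤ (lmin+lmax)*C := (mul_pos (by linarith) hCpos).le
    exact kant_aux lmin lmax A B C h0 h1 key
  rw [← sub_nonneg]
  have hδ : ((lmax - lmin) / (lmax + lmin)) ^ 2 * B - (B - 2*sstar*C + sstar^2*A)
      = ((lmin+lmax)^2*C^2 - 4*lmin*lmax*(A*B)) / (A*(lmax+lmin)^2) := by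
    rw [hsstar']
    field_simp
    ring
  rw [hδ]
  exact div_nonneg (by linarith [hkey2]) (mul_nonneg hApos.le (sq_nonneg _))
end

section
/- Let phi(s) = f(x - s nabla f(x)) with f convex differentiable and nabla f(x) != 0. Suppose the doubling loop of Algorithm 5 terminates with step s such that phi'(s) < 0 <= phi'(cs) for c > 1. Then the returned point x_new = x - s nabla f(x) satisfies f(x_new) < f(x) and f(x_new) <= f(x - t nabla f(x)) + (phi(s) - min_{t in [0, cs]} phi(t)) for the minimizer; in particular f(x_new) - min_t phi(t) <= phi(s) - phi(s_opt) <= |phi'(s)| * (cs - s) <= (c-1) s |phi'(s)|. -/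
/-!
The restriction `φ` of `f` to the search line is convex with derivative `φ' = dφ`, so everything
follows from the tangent-line inequality `φ a + φ' a * (t - a) ≤ φ t`. At `a = s, t = 0` it gives
the decrease. At `a = s` and `t` a minimizer it gives `φ s - φ sopt ≤ |φ' s| * (sopt - s)`, and
the minimizer may be taken `≤ c * s`, since `φ' (c * s) ≥ 0` makes `φ` nondecreasing beyond `c * s`.
-/

open Set
open scoped RealInnerProductSpace

namespace ConvexOn

variable {S : Set ℝ} {φ : ℝ → ℝ} {a d : ℝ}

theorem add_mul_sub_le_of_hasDerivAt (hφ : ConvexOn ℝ S φ) (ha : a ∈ S)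
    (hd : HasDerivAt φ d a) {t : ℝ} (ht : t ∈ S) : φ a + d * (t - a) ≤ φ t := by
  rcases lt_trichotomy t a with hta | rfl | hat
  · have hslope := hφ.slope_le_of_hasDerivAt ht ha hta hd
    rw [slope_def_field, div_le_iff₀ (sub_pos.mpr hta)] at hslope
    linarith
  · simp
  · have hslope := hφ.le_slope_of_hasDerivAt ha ht hat hd
    rw [slope_def_field, le_div_iff₀ (sub_pos.mpr hat)] at hslope
    linarith

theorem lt_of_hasDerivAt_neg (hφ : ConvexOn ℝ S φ) (ha : a ∈ S) (hd : HasDerivAt φ d a)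
    (hneg : d < 0) {t : ℝ} (ht : t ∈ S) (hta : t < a) : φ a < φ t := by
  have := hφ.add_mul_sub_le_of_hasDerivAt ha hd ht
  nlinarith

theorem le_of_hasDerivAt_nonneg (hφ : ConvexOn ℝ S φ) (ha : a ∈ S) (hd : HasDerivAt φ d a)
    (hnonneg : 0 ≤ d) {t : ℝ} (ht : t ∈ S) (hat : a ≤ t) : φ a ≤ φ t := by
  have := hφ.add_mul_sub_le_of_hasDerivAt ha hd ht
  nlinarith

theorem sub_min_le_of_hasDerivAt (hφ : ConvexOn ℝ univ φ) {s b ds db : ℝ}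
    (hs : HasDerivAt φ ds s) (hb : HasDerivAt φ db b) (hds : ds ≤ 0) (hdb : 0 ≤ db)
    {m : ℝ} (hm : ∀ t, φ m ≤ φ t) : φ s - φ m ≤ |ds| * (b - s) := by
  obtain ⟨m', hm'b, hm'⟩ : ∃ m' ≤ b, φ m' = φ m := by
    rcases le_or_gt m b with hmb | hbm
    · exact ⟨m, hmb, rfl⟩
    · exact ⟨b, le_rfl, le_antisymm
        (hφ.le_of_hasDerivAt_nonneg (mem_univ b) hb hdb (mem_univ m) hbm.le) (hm b)⟩
  have htangent := hφ.add_mul_sub_le_of_hasDerivAt (mem_univ s) hs (mem_univ m')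
  rw [abs_of_nonpos hds]
  nlinarith

end ConvexOn

theorem HasGradientAt.hasDerivAt_comp_sub_smul {E : Type*} [NormedAddCommGroup E]
    [InnerProductSpace ℝ E] [CompleteSpace E] {f : E → ℝ} {x v g : E} {t : ℝ}
    (hf : HasGradientAt f g (x - t • v)) :
    HasDerivAt (fun t : ℝ => f (x - t • v)) (-⟪v, g⟫) t := by
  have hline : HasDerivAt (fun t : ℝ => x - t • v) (-v) t := by
    simpa using ((hasDerivAt_id t).smul_const v).const_sub x
  have := (hasGradientAt_iff_hasFDerivAt.mp hf).comp_hasDerivAt t hline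
  simpa [Function.comp_def, real_inner_comm] using this

theorem ConvexOn.comp_sub_smul {E : Type*} [AddCommGroup E] [Module ℝ E] {f : E → ℝ}
    (hf : ConvexOn ℝ univ f) (x v : E) : ConvexOn ℝ univ (fun t : ℝ => f (x - t • v)) := by
  have hline : (fun t : ℝ => f (x - t • v)) = f ∘ AffineMap.lineMap x (x - v) := by
    ext t
    simp [AffineMap.lineMap_apply, sub_eq_add_neg, add_comm]
  simpa [hline] using hf.comp_affineMap (AffineMap.lineMap x (x - v))

theorem stmt19_general (n : ℕ) (f : EuclideanSpace ℝ (Fin n) → ℝ)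
    (gf : EuclideanSpace ℝ (Fin n) → EuclideanSpace ℝ (Fin n))
    (hgrad : ∀ y, HasGradientAt f (gf y) y)
    (hconv : ConvexOn ℝ Set.univ f)
    (x : EuclideanSpace ℝ (Fin n))
    (φ : ℝ → ℝ) (hφ : ∀ t, φ t = f (x - t • gf x))
    (dφ : ℝ → ℝ) (hdφ : ∀ t, dφ t = -⟪gf x, gf (x - t • gf x)⟫)
    (s c : ℝ) (hs : 0 < s)
    (hneg : dφ s < 0) (hpos : 0 ≤ dφ (c * s)) :
    f (x - s • gf x) < f x
    ∧ ∀ sopt : ℝ, (∀ t : ℝ, φ sopt ≤ φ t) →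
        φ s - φ sopt ≤ |dφ s| * (c * s - s)
        ∧ |dφ s| * (c * s - s) = (c - 1) * s * |dφ s| := by
  have hφline : φ = fun t => f (x - t • gf x) := funext hφ
  have hderiv (t : ℝ) : HasDerivAt φ (dφ t) t := by
    rw [hφline, hdφ]
    exact (hgrad _).hasDerivAt_comp_sub_smul
  have hφconv : ConvexOn ℝ univ φ := hφline ▸ hconv.comp_sub_smul x (gf x)
  have hdecrease : φ s < φ 0 :=
    hφconv.lt_of_hasDerivAt_neg (mem_univ s) (hderiv s) hneg (mem_univ 0) hs
  refine ⟨by simpa [hφ] using hdecrease, fun sopt hopt => ⟨?_, by ring⟩⟩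
  exact hφconv.sub_min_le_of_hasDerivAt (hderiv s) (hderiv (c * s)) hneg.le hpos hopt

/-- Quality estimate for the gradient-based inexact line search (Algorithm 5): let
`φ(t) = f (x - t • ∇f x)` with `f` convex differentiable and `∇f x ≠ 0`, whose derivative
is `φ'(t) = -⟪∇f x, ∇f (x - t • ∇f x)⟫`. If the doubling loop terminates with `s > 0`
such that `φ'(s) < 0 ≤ φ'(c*s)` for `c > 1`, then the returned point
`x_new = x - s • ∇f x` satisfies `f x_new < f x`, and for any global minimizer `s_opt`
of `φ`, `φ(s) - φ(s_opt) ≤ |φ'(s)| * (c*s - s) = (c-1) * s * |φ'(s)|`. -/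
theorem stmt19 (n : ℕ) (f : EuclideanSpace ℝ (Fin n) → ℝ)
    (gf : EuclideanSpace ℝ (Fin n) → EuclideanSpace ℝ (Fin n))
    (hgrad : ∀ y, HasGradientAt f (gf y) y)
    (hconv : ConvexOn ℝ Set.univ f)
    (x : EuclideanSpace ℝ (Fin n)) (hx : gf x ≠ 0)
    (φ : ℝ → ℝ) (hφ : ∀ t, φ t = f (x - t • gf x))
    (dφ : ℝ → ℝ) (hdφ : ∀ t, dφ t = -⟪gf x, gf (x - t • gf x)⟫)
    (s c : ℝ) (hs : 0 < s) (hc : 1 < c)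
    (hneg : dφ s < 0) (hpos : 0 ≤ dφ (c * s)) :
    f (x - s • gf x) < f x
    ∧ ∀ sopt : ℝ, (∀ t : ℝ, φ sopt ≤ φ t) →
        φ s - φ sopt ≤ |dφ s| * (c * s - s)
        ∧ |dφ s| * (c * s - s) = (c - 1) * s * |dφ s| :=
  stmt19_general n f gf hgrad hconv x φ hφ dφ hdφ s c hs hneg hpos
end
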